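/- arXiv:2307.01065 — 6 statements merged into one kernel-verified Lean document; each statement's English description precedes it below -/
import Mathlib

section
/- Adding a good addable i-node to a partition λ yields an e-regular partition whenever λ is e-regular. Consequently, any partition obtained from the empty partition by a sequence of Kashiwara operators f̃_{i_1}, ..., f̃_{i_n} (for residues modulo e) is e-regular. -/
/-!
Suppose adding the good addable `i`-node in row `a` produced `e` equal nonzero rows
`j, …, j + e - 1`. Since `λ` is `e`-regular, `a = j + e - 1`, `λ_j = ⋯ = λ_{a-1} = λ_a + 1`,
and row `j` of `λ` is addable. Its addable node has the same residue `i` as the one in row `a`,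
while the only removable nodes in rows `j, …, a` have residues `i ± 1`. Hence the letters `A`
of rows `a` and `j` are adjacent in the `i`-reading word, and cancelling `RA` pairs never
separates them: the `A` of row `a` is never the rightmost surviving `A`, a contradiction.
-/

structure YPartition where
  parts : ℕ → ℕ
  antitone : Antitone parts
  finite : ∃ N, parts N = 0

def emptyP : YPartition := ⟨fun _ => 0, fun _ _ _ => le_rfl, ⟨0, rfl⟩⟩

/-- `l` is `e`-regular: no nonzero part is repeated `e` or more times. -/
def ERegular (e : ℕ) (l : YPartition) : Prop :=
  ¬ ∃ j, l.parts j ≠ 0 ∧ l.parts j = l.parts (j + e - 1)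
/-- there is a removable node at (the 0-indexed) row `a`, namely `(a, l.parts a - 1)`. -/
def RemovableRow (l : YPartition) (a : ℕ) : Prop := l.parts (a+1) < l.parts a

/-- there is an addable node at row `a`, namely `(a, l.parts a)`. -/
def AddableRow (l : YPartition) (a : ℕ) : Prop := a = 0 ∨ l.parts a < l.parts (a-1)

instance (l : YPartition) (a : ℕ) : Decidable (RemovableRow l a) :=
  inferInstanceAs (Decidable (_ < _))

instance (l : YPartition) (a : ℕ) : Decidable (AddableRow l a) :=
  inferInstanceAs (Decidable (_ ∨ _))

/-- residue of the removable node at row `a` (0-indexed cell `(a, parts a - 1)`). -/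
def remRes (e : ℕ) (l : YPartition) (a : ℕ) : ZMod e := (((l.parts a : ℤ) - 1 - (a : ℤ)) : ℤ)

/-- residue of the addable node at row `a` (0-indexed cell `(a, parts a)`). -/
def addRes (e : ℕ) (l : YPartition) (a : ℕ) : ZMod e := (((l.parts a : ℤ) - (a : ℤ)) : ℤ)

/-- the reading word of addable/removable `i`-nodes, from bottom row to top row;
`true` encodes the letter `A` (addable), `false` encodes `R` (removable);
each letter is recorded together with its row. `N` is any bound with `l.parts N = 0`. -/
def word1 (e : ℕ) (i : ZMod e) (l : YPartition) (N : ℕ) : List (Bool × ℕ) :=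
  ((List.range (N+2)).reverse).flatMap (fun a =>
    (if RemovableRow l a ∧ remRes e l a = i then [(false, a)] else []) ++
    (if AddableRow l a ∧ addRes e l a = i then [(true, a)] else []))

/-- recursively delete adjacent `RA` factors (`f` extracts the letter, `true = A`). -/
def reduceWord {α : Type} (f : α → Bool) : List α → List α
  | [] => []
  | x :: xs =>
    match reduceWord f xs with
    | [] => [x]
    | y :: t => if f x = false ∧ f y = true then t else x :: y :: t

/-- row of the good addable `i`-node: the rightmost `A` of the reduced word. -/
def goodAddRow (e : ℕ) (i : ZMod e) (l : YPartition) (N : ℕ) : Option ℕ :=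
  ((reduceWord Prod.fst (word1 e i l N)).reverse.find? (fun x => x.1)).map Prod.snd

/-- row of the good removable `i`-node: the leftmost `R` of the reduced word. -/
def goodRemRow (e : ℕ) (i : ZMod e) (l : YPartition) (N : ℕ) : Option ℕ :=
  ((reduceWord Prod.fst (word1 e i l N)).find? (fun x => !x.1)).map Prod.snd

/-- one step of the Kashiwara operator `f̃_i` : add the good addable `i`-node. -/
def FStep1 (e : ℕ) (i : ZMod e) (P Q : YPartition) : Prop :=
  ∃ a N, P.parts N = 0 ∧ goodAddRow e i P N = some a ∧
    Q.parts = Function.update P.parts a (P.parts a + 1)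

namespace List

variable {α : Type} {f : α → Bool}

theorem reduceWord_sublist : ∀ l : List α, (reduceWord f l).Sublist l
  | [] => Sublist.refl _
  | x :: xs => by
    have ih : (reduceWord f xs).Sublist xs := reduceWord_sublist xs
    rcases h : reduceWord f xs with _ | ⟨y, t⟩
    · simp [reduceWord, h]
    · rw [h] at ih
      simp only [reduceWord, h]
      split
      · exact ((sublist_cons_self y t).trans ih).cons x
      · exact ih.cons_cons x

theorem reduceWord_cons_of_true {x : α} (hx : f x = true) (xs : List α) :
    reduceWord f (x :: xs) = x :: reduceWord f xs := by
  rcases h : reduceWord f xs with _ | ⟨y, t⟩ <;> simp [reduceWord, h, hx]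

theorem exists_reduceWord_append (u w : List α) :
    ∃ u' s, reduceWord f (u ++ w) = u' ++ s ∧ s <:+ reduceWord f w ∧
      ∀ x ∈ u', x ∈ u := by
  induction u with
  | nil => exact ⟨[], reduceWord f w, rfl, suffix_refl _, by simp⟩
  | cons x u ih =>
    obtain ⟨u', s, heq, hs, hmem⟩ := ih
    rw [cons_append]
    rcases u' with _ | ⟨z, u''⟩
    · rcases s with _ | ⟨y, t⟩
      · exact ⟨[x], [], by simp_all [reduceWord], nil_suffix, by simp⟩
      · simp only [nil_append] at heq
        simp only [reduceWord, heq]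
        split
        · exact ⟨[], t, rfl, (suffix_cons y t).trans hs, by simp⟩
        · exact ⟨[x], y :: t, rfl, hs, by simp⟩
    · simp only [cons_append] at heq
      simp only [reduceWord, heq]
      split
      · exact ⟨u'', s, rfl, hs, fun z' hz' =>
          mem_cons_of_mem x (hmem z' (mem_cons_of_mem z hz'))⟩
      · refine ⟨x :: z :: u'', s, rfl, hs, ?_⟩
        simp only [mem_cons]
        rintro z' (rfl | rfl | hz')
        · exact .inl rfl
        · exact .inr (hmem _ mem_cons_self)
        · exact .inr (hmem z' (mem_cons_of_mem z hz'))

/-- Of two adjacent `true` letters, the first is never the last `true` letter of the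
reduced word. -/
theorem mem_of_find?_reverse_reduceWord {u v : List α} {x y z : α} (hx : f x = true)
    (hy : f y = true) (h : (reduceWord f (u ++ x :: y :: v)).reverse.find? f = some z) :
    z ∈ u ∨ z = y ∨ z ∈ v := by
  obtain ⟨u', s, hred, hsuf, hu'⟩ := exists_reduceWord_append (f := f) u (x :: y :: v)
  rw [reduceWord_cons_of_true hx, reduceWord_cons_of_true hy] at hsuf
  have hv : ∀ z ∈ reduceWord f v, z ∈ v := fun z hz => (reduceWord_sublist v).mem hz
  rw [hred] at h
  rcases suffix_cons_iff.1 hsuf with rfl | hsuf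
  · simp only [reverse_append, reverse_cons, append_assoc, cons_append,
      find?_append] at h
    rcases hfind : (reduceWord f v).reverse.find? f with _ | w
    · simp only [hfind, Option.none_or, find?_cons_of_pos hy, Option.some.injEq] at h
      exact Or.inr (Or.inl h.symm)
    · simp only [hfind, Option.some_or, Option.some.injEq] at h
      exact Or.inr (Or.inr (hv z (h ▸ mem_reverse.1 (mem_of_find?_eq_some hfind))))
  · have hz := mem_append.1 (mem_reverse.1 (mem_of_find?_eq_some h))
    rcases hz with hz | hz
    · exact Or.inl (hu' z hz)
    · rcases mem_cons.1 (hsuf.sublist.mem hz) with rfl | hz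
      · exact Or.inr (Or.inl rfl)
      · exact Or.inr (Or.inr (hv z hz))

theorem exists_flatMap_range_reverse_eq {β : Type*} (g : ℕ → List β) {k n : ℕ}
    (hk : k < n) :
    ∃ U, (range n).reverse.flatMap g = U ++ g k ++ (range k).reverse.flatMap g ∧
      ∀ x ∈ U, ∃ r, k < r ∧ r < n ∧ x ∈ g r := by
  obtain ⟨d, rfl⟩ : ∃ d, n = k + 1 + d := ⟨n - (k + 1), by omega⟩
  refine ⟨((range d).map (k + 1 + ·)).reverse.flatMap g, ?_, ?_⟩
  · rw [range_add, range_succ]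
    simp
  · intro x hx
    simp only [mem_flatMap, mem_reverse, mem_map, mem_range] at hx
    obtain ⟨_, ⟨r, hr, rfl⟩, hx⟩ := hx
    exact ⟨_, by omega, by omega, hx⟩

end List

namespace YPartition

variable {e : ℕ} {i : ZMod e} {l m : YPartition} {a j N : ℕ}

theorem addRes_eq (e : ℕ) (l : YPartition) (r : ℕ) :
    addRes e l r = (l.parts r : ZMod e) - r := by
  simp [addRes]

theorem remRes_eq_addRes_sub_one (e : ℕ) (l : YPartition) (r : ℕ) :
    remRes e l r = addRes e l r - 1 := by
  simp only [remRes, addRes]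
  push_cast
  ring

def rowLetters (e : ℕ) (i : ZMod e) (l : YPartition) (r : ℕ) : List (Bool × ℕ) :=
  (if RemovableRow l r ∧ remRes e l r = i then [(false, r)] else []) ++
    (if AddableRow l r ∧ addRes e l r = i then [(true, r)] else [])

theorem word1_eq_flatMap_rowLetters (e : ℕ) (i : ZMod e) (l : YPartition) (N : ℕ) :
    word1 e i l N = (List.range (N + 2)).reverse.flatMap (rowLetters e i l) :=
  rfl

theorem mem_rowLetters {r : ℕ} {x : Bool × ℕ} (h : x ∈ rowLetters e i l r) :
    x.2 = r ∧ (x.1 = true → addRes e l r = i) := by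
  unfold rowLetters at h
  split_ifs at h <;> aesop

theorem addRes_eq_of_goodAddRow (h : goodAddRow e i l N = some a) : addRes e l a = i := by
  obtain ⟨x, hx, rfl⟩ := Option.map_eq_some_iff.1 h
  have hxw : x ∈ word1 e i l N :=
    (List.reduceWord_sublist _).mem (List.mem_reverse.1 (List.mem_of_find?_eq_some hx))
  rw [word1_eq_flatMap_rowLetters, List.mem_flatMap] at hxw
  obtain ⟨r, -, hxr⟩ := hxw
  obtain ⟨rfl, hres⟩ := mem_rowLetters hxr
  exact hres (by simpa using List.find?_some hx)

theorem goodAddRow_ne_of_word1_eq {U V : List (Bool × ℕ)}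
    (hw : word1 e i l N = U ++ (true, a) :: (true, j) :: V) (hUV : ∀ x ∈ U ++ V, x.2 ≠ a)
    (hja : j ≠ a) : goodAddRow e i l N ≠ some a := by
  intro h
  obtain ⟨z, hz, rfl⟩ := Option.map_eq_some_iff.1 h
  rw [hw] at hz
  rcases List.mem_of_find?_reverse_reduceWord (f := Prod.fst) rfl rfl hz with hz | rfl | hz
  · exact hUV z (List.mem_append_left _ hz) rfl
  · exact hja rfl
  · exact hUV z (List.mem_append_right _ hz) rfl

theorem exists_run_of_not_eRegular_update (he : 1 < e) (hreg : ERegular e l)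
    (hm : m.parts = Function.update l.parts a (l.parts a + 1)) (hm' : ¬ ERegular e m) :
    ∃ j, a + 1 = j + e ∧ ∀ r, j ≤ r → r < a → l.parts r = l.parts a + 1 := by
  obtain ⟨j, hj0, hje⟩ := not_not.1 hm'
  have hoff : ∀ r, r ≠ a → m.parts r = l.parts r := fun r hr => by
    rw [hm, Function.update_of_ne hr]
  have hma : m.parts a = l.parts a + 1 := by rw [hm, Function.update_self]
  have hconst : ∀ r, j ≤ r → r ≤ j + e - 1 → m.parts r = m.parts j := fun r h1 h2 =>
    le_antisymm (m.antitone h1) (hje ▸ m.antitone h2)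
  have hja : j ≤ a ∧ a ≤ j + e - 1 := by
    by_contra hout
    exact hreg ⟨j, hoff j (by omega) ▸ hj0,
      by rw [← hoff j (by omega), ← hoff _ (by omega)]; exact hje⟩
  have hlast : a = j + e - 1 := by
    by_contra hne
    have h1 := hconst (a + 1) (by omega) (by omega)
    have h2 := hconst a hja.1 hja.2
    rw [hoff _ (by omega)] at h1
    have := l.antitone (show a ≤ a + 1 by omega)
    omega
  refine ⟨j, by omega, fun r hjr hra => ?_⟩
  rw [← hoff r (by omega), ← hma, hconst r hjr (by omega), hconst a hja.1 hja.2]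

theorem addableRow_of_eRegular (hreg : ERegular e l) (h0 : l.parts j ≠ 0)
    (hrun : l.parts j = l.parts (j + e - 2)) : AddableRow l j := by
  rcases j with _ | j
  · exact Or.inl rfl
  · refine Or.inr (lt_of_le_of_ne (l.antitone (Nat.sub_le _ 1)) fun h => hreg ⟨j, ?_, ?_⟩)
    · simpa [h] using h0
    · simp only [Nat.add_sub_cancel] at h
      rw [← h, hrun]
      congr 1
      omega

theorem remRes_ne_of_run (he : 1 < e)
    (hrun : ∀ r, j ≤ r → r < a → l.parts r = l.parts a + 1) (hi : addRes e l a = i) {r : ℕ} (hjr : j ≤ r) (hra : r ≤ a) (hR : RemovableRow l r) :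
    remRes e l r ≠ i := by
  have : Fact (1 < e) := ⟨he⟩
  rcases hra.lt_or_eq with hra | rfl
  · obtain rfl : r + 1 = a := by
      by_contra hne
      have := hrun (r + 1) (by omega) (by omega)
      have := hrun r hjr hra
      exact (show ¬ RemovableRow l r by unfold RemovableRow; omega) hR
    rw [remRes_eq_addRes_sub_one, ← hi, addRes_eq, addRes_eq, hrun r hjr hra]
    push_cast
    intro h
    exact one_ne_zero (by linear_combination h)
  · rw [remRes_eq_addRes_sub_one, hi]
    intro h
    exact one_ne_zero (by linear_combination -h)

theorem addRes_eq_of_run (hja : a + 1 = j + e) (hlt : j < a)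
    (hrun : ∀ r, j ≤ r → r < a → l.parts r = l.parts a + 1) (hi : addRes e l a = i) :
    addRes e l j = i := by
  have hcast : (a : ZMod e) + 1 = j := by
    simpa using congrArg (Nat.cast : ℕ → ZMod e) hja
  rw [← hi, addRes_eq, addRes_eq, hrun j le_rfl hlt]
  push_cast
  linear_combination hcast

theorem exists_word1_eq_append_cons_cons (he : 1 < e) (hN : l.parts N = 0)
    (hj : AddableRow l j) (hja : a + 1 = j + e)
    (hrun : ∀ r, j ≤ r → r < a → l.parts r = l.parts a + 1) (hi : addRes e l a = i) :
    ∃ U V, word1 e i l N = U ++ (true, a) :: (true, j) :: V ∧ ∀ x ∈ U ++ V, x.2 ≠ a := by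
  have hlt : j < a := by omega
  have hrem : ∀ r, j ≤ r → r ≤ a → ¬ (RemovableRow l r ∧ remRes e l r = i) :=
    fun r hjr hra hR => remRes_ne_of_run he hrun hi hjr hra hR.1 hR.2
  have haN : a < N + 2 := by
    by_contra h
    have := l.antitone (show N ≤ a - 1 by omega)
    have := hrun (a - 1) (by omega) (by omega)
    omega
  have hA : AddableRow l a := Or.inr (by rw [hrun (a - 1) (by omega) (by omega)]; omega)
  have hla : rowLetters e i l a = [(true, a)] := by
    simp [rowLetters, hrem a hlt.le le_rfl, hA, hi]
  have hlj : rowLetters e i l j = [(true, j)] := by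
    simp [rowLetters, hrem j le_rfl hlt.le, hj, addRes_eq_of_run hja hlt hrun hi]
  have hmid : ∀ r, j < r → r < a → rowLetters e i l r = [] := fun r hjr hra => by
    have hnA : ¬ AddableRow l r := by
      unfold AddableRow
      rw [hrun r (by omega) hra, hrun (r - 1) (by omega) (by omega)]
      omega
    simp [rowLetters, hrem r hjr.le hra.le, hnA]
  obtain ⟨U, hU, hUa⟩ := List.exists_flatMap_range_reverse_eq (rowLetters e i l) haN
  obtain ⟨W, hW, hWj⟩ := List.exists_flatMap_range_reverse_eq (rowLetters e i l) hlt
  obtain rfl : W = [] := List.eq_nil_iff_forall_not_mem.2 fun x hx => by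
    obtain ⟨r, hjr, hra, hx⟩ := hWj x hx
    simp [hmid r hjr hra] at hx
  refine ⟨U, (List.range j).reverse.flatMap (rowLetters e i l), ?_, fun x hx => ?_⟩
  · rw [word1_eq_flatMap_rowLetters, hU, hW, hla, hlj]
    simp
  · rcases List.mem_append.1 hx with hx | hx
    · obtain ⟨r, har, -, hx⟩ := hUa x hx
      exact (mem_rowLetters hx).1 ▸ har.ne'
    · obtain ⟨r, hr, hx⟩ := List.mem_flatMap.1 hx
      rw [List.mem_reverse, List.mem_range] at hr
      rw [(mem_rowLetters hx).1]
      omega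

theorem eRegular_of_goodAddRow (he : 1 < e) (hN : l.parts N = 0) (hreg : ERegular e l)
    (hgood : goodAddRow e i l N = some a)
    (hm : m.parts = Function.update l.parts a (l.parts a + 1)) : ERegular e m := by
  by_contra hm'
  obtain ⟨j, hja, hrun⟩ := exists_run_of_not_eRegular_update he hreg hm hm'
  have hj : AddableRow l j := addableRow_of_eRegular hreg
    (by rw [hrun j le_rfl (by omega)]; omega)
    (by rw [hrun j le_rfl (by omega), hrun (j + e - 2) (by omega) (by omega)])
  obtain ⟨U, V, hw, hUV⟩ :=
    exists_word1_eq_append_cons_cons he hN hj hja hrun (addRes_eq_of_goodAddRow hgood)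
  exact goodAddRow_ne_of_word1_eq hw hUV (by omega) hgood

theorem eRegular_emptyP (e : ℕ) : ERegular e emptyP := fun ⟨_, h, _⟩ => h rfl

end YPartition

/-- adding a good addable `i`-node preserves `e`-regularity; consequently,
any partition obtained from the empty partition by a sequence of Kashiwara operators
`f̃` is `e`-regular. -/
theorem stmt_3 (e : ℕ) (he : 1 < e) :
    (∀ (i : ZMod e) (l m : YPartition) (N a : ℕ), l.parts N = 0 → ERegular e l →
      goodAddRow e i l N = some a →
      m.parts = Function.update l.parts a (l.parts a + 1) →
      ERegular e m) ∧
    (∀ l : YPartition,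
      Relation.ReflTransGen (fun P Q => ∃ i : ZMod e, FStep1 e i P Q) emptyP l →
      ERegular e l) := by
  refine ⟨fun _ _ _ _ _ => YPartition.eRegular_of_goodAddRow he, fun l hl => ?_⟩
  induction hl with
  | refl => exact YPartition.eRegular_emptyP e
  | tail _ hstep ih =>
    obtain ⟨i, a, N, hN, hgood, hm⟩ := hstep
    exact YPartition.eRegular_of_goodAddRow he hN ih hgood hm
end

section
/- The map Ψ_{(e,(m_1,m_2))} : P^{m_1} × P^{m_2} → P^{m_1} × P^{m_2+e} is well defined: for any (X_1, X_2) with X_1 strictly increasing of length m_1 and X_2 strictly increasing of length m_2 (m_1 ≤ m_2), the output pair (Y_1, Y_2) consists of a set Y_1 of m_1 distinct nonnegative integers and a set Y_2 of m_2 + e distinct nonnegative integers. -/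
/-- pick the largest element of `Y` that is `≤ a`, or the largest element of `Y` if none. -/
def pickLE (a : ℕ) (Y : Finset ℕ) : ℕ :=
  if h : (Y.filter (fun b => b ≤ a)).Nonempty then (Y.filter (fun b => b ≤ a)).max' h
  else if h2 : Y.Nonempty then Y.max' h2 else 0

/-- greedy matching: process the given list in order, each time picking via `pickLE`
from the remaining elements of `Y`. -/
def greedyList : List ℕ → Finset ℕ → List ℕ
  | [], _ => []
  | a :: as, Y => pickLE a Y :: greedyList as (Y.erase (pickLE a Y))

/-- the list of images of the greedy injection `φ : X1 → X2`, processing the elements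
of `X1` in increasing order. -/
def phiList (X1 X2 : Finset ℕ) : List ℕ := greedyList (X1.sort (· ≤ ·)) X2

/-- the image `Y1 = φ(X1)` of the greedy injection. -/
def phiImage (X1 X2 : Finset ℕ) : Finset ℕ := (phiList X1 X2).toFinset

/-- the map `Ψ_{(e,(m1,m2))}` on pairs of finite sets of nonnegative integers:
`Ψ(X1,X2) = (φ(X1), (X1+e) ∪ {b+e : b ∈ X2 \ φ(X1)} ∪ {0,…,e-1})`. -/
def Psi (e : ℕ) (X1 X2 : Finset ℕ) : Finset ℕ × Finset ℕ :=
  (phiImage X1 X2,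
   (X1.image (fun x => x + e)) ∪ ((X2 \ phiImage X1 X2).image (fun x => x + e)) ∪
     Finset.range e)

lemma pickLE_mem (a : ℕ) {Y : Finset ℕ} (h : Y.Nonempty) : pickLE a Y ∈ Y := by
  unfold pickLE
  by_cases h1 : (Y.filter (fun b => b ≤ a)).Nonempty
  · rw [dif_pos h1]
    exact Finset.mem_of_mem_filter _ ((Y.filter (fun b => b ≤ a)).max'_mem h1)
  · rw [dif_neg h1, dif_pos h]
    exact Y.max'_mem h

lemma greedy_length (l : List ℕ) (Y : Finset ℕ) : (greedyList l Y).length = l.length := by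
  induction l generalizing Y with
  | nil => rfl
  | cons a as ih => simp [greedyList, ih]

lemma greedy_subset {l : List ℕ} {Y : Finset ℕ} (h : l.length ≤ Y.card) :
    ∀ b ∈ greedyList l Y, b ∈ Y := by
  induction l generalizing Y with
  | nil => simp [greedyList]
  | cons a as ih =>
    intro b hb
    have hne : Y.Nonempty := Finset.card_pos.mp (by simp at h; omega)
    rcases List.mem_cons.mp hb with rfl | hb
    · exact pickLE_mem a hne
    · have hc : as.length ≤ (Y.erase (pickLE a Y)).card := by
        rw [Finset.card_erase_of_mem (pickLE_mem a hne)]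
        simp at h; omega
      exact Finset.mem_of_mem_erase (ih hc b hb)

lemma greedy_nodup {l : List ℕ} {Y : Finset ℕ} (h : l.length ≤ Y.card) :
    (greedyList l Y).Nodup := by
  induction l generalizing Y with
  | nil => simp [greedyList]
  | cons a as ih =>
    have hne : Y.Nonempty := Finset.card_pos.mp (by simp at h; omega)
    have hc : as.length ≤ (Y.erase (pickLE a Y)).card := by
      rw [Finset.card_erase_of_mem (pickLE_mem a hne)]
      simp at h; omega
    rw [greedyList, List.nodup_cons]
    constructor
    · intro hmem
      exact (Finset.mem_erase.mp (greedy_subset hc _ hmem)).1 rfl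
    · exact ih hc

lemma greedy_mem_of_mem {l : List ℕ} {Y : Finset ℕ} :
    ∀ b ∈ l, b ∈ Y → b ∈ greedyList l Y := by
  induction l generalizing Y with
  | nil => simp
  | cons a as ih =>
    intro b hb hbY
    rw [greedyList, List.mem_cons]
    rcases List.mem_cons.mp hb with rfl | hb
    · left
      have hfil : b ∈ Y.filter (fun c => c ≤ b) := by simp [hbY]
      have hne : (Y.filter (fun c => c ≤ b)).Nonempty := ⟨b, hfil⟩
      unfold pickLE
      rw [dif_pos hne]
      have h1 := Finset.le_max' _ b hfil
      have h2 := (Finset.mem_filter.mp ((Y.filter (fun c => c ≤ b)).max'_mem hne)).2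
      exact le_antisymm h1 h2
    · by_cases hb2 : b = pickLE a Y
      · left; exact hb2
      · right
        exact ih b hb (Finset.mem_erase.mpr ⟨hb2, hbY⟩)

/-- `Ψ_{(e,(m1,m2))}` is well defined: the greedy injection is injective,
the first output has `m1` elements and the second output has `m2 + e` elements. -/
theorem stmt_9 (e : ℕ) (X1 X2 : Finset ℕ) (hcard : X1.card ≤ X2.card) :
    (phiList X1 X2).Nodup ∧
    (Psi e X1 X2).1.card = X1.card ∧
    (Psi e X1 X2).2.card = X2.card + e := by

  have hlen : (X1.sort (· ≤ ·)).length = X1.card := Finset.length_sort _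
  have hl : (X1.sort (· ≤ ·)).length ≤ X2.card := by rw [hlen]; exact hcard
  have hnodup : (phiList X1 X2).Nodup := greedy_nodup hl
  have hlen1 : (phiList X1 X2).length = X1.card := by
    rw [phiList, greedy_length, hlen]
  have hcard1 : (phiImage X1 X2).card = X1.card := by
    rw [phiImage, List.toFinset_card_of_nodup hnodup, hlen1]
  have hsub : phiImage X1 X2 ⊆ X2 := by
    intro b hb
    exact greedy_subset hl b (List.mem_toFinset.mp hb)
  have hkey : Disjoint X1 (X2 \ phiImage X1 X2) := by
    rw [Finset.disjoint_left]
    intro b hb1 hb2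
    rw [Finset.mem_sdiff] at hb2
    exact hb2.2 (List.mem_toFinset.mpr
      (greedy_mem_of_mem b ((Finset.mem_sort _).mpr hb1) hb2.1))
  have hinj : Function.Injective (fun x : ℕ => x + e) := fun x y h => by simpa using h
  refine ⟨hnodup, hcard1, ?_⟩
  have hd1 : Disjoint (X1.image (fun x => x + e))
      ((X2 \ phiImage X1 X2).image (fun x => x + e)) :=
    (Finset.disjoint_image hinj).mpr hkey
  have hd2 : Disjoint ((X1.image (fun x => x + e)) ∪
      ((X2 \ phiImage X1 X2).image (fun x => x + e))) (Finset.range e) := by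
    rw [Finset.disjoint_left]
    intro b hb hbr
    rw [Finset.mem_range] at hbr
    rcases Finset.mem_union.mp hb with h | h <;>
      · obtain ⟨x, _, rfl⟩ := Finset.mem_image.mp h; omega
  unfold Psi
  simp only
  rw [Finset.card_union_of_disjoint hd2, Finset.card_union_of_disjoint hd1,
    Finset.card_image_of_injective _ hinj, Finset.card_image_of_injective _ hinj,
    Finset.card_sdiff_of_subset hsub, Finset.card_range, hcard1]
  omega
end

section
/- For any strictly increasing sequence X of m nonnegative integers and e ≥ 1, X ⊆ (X + e) ∪ {0, 1, ..., e-1} fails in general, but the second application of Ψ in the chain starting from (X, X) always produces a first component consisting entirely of elements of the second component: i.e. if (Y_1, Y_2) = Ψ_{(e,(m,m+e))}(X, (X+e) ∪ {0,...,e-1}), then every element of Y_1 lies in Y_2. -/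

lemma pickLE_mem_or_zero (a : ℕ) (Y : Finset ℕ) : pickLE a Y ∈ Y ∨ pickLE a Y = 0 := by
  unfold pickLE
  split_ifs with h h2
  · exact Or.inl (Finset.mem_of_mem_filter _ ((Y.filter (fun b => b ≤ a)).max'_mem h))
  · exact Or.inl (Y.max'_mem h2)
  · exact Or.inr rfl

lemma greedyList_mem_or_zero : ∀ (l : List ℕ) (Y : Finset ℕ) (x : ℕ),
    x ∈ greedyList l Y → x ∈ Y ∨ x = 0
  | [], Y, x, h => by simp [greedyList] at h
  | a :: as, Y, x, h => by
    simp only [greedyList, List.mem_cons] at h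
    rcases h with rfl | h
    · exact pickLE_mem_or_zero a Y
    · rcases greedyList_mem_or_zero as _ x h with h' | h'
      · exact Or.inl (Finset.mem_of_mem_erase h')
      · exact Or.inr h'

/-- the inclusion `X ⊆ (X+e) ∪ {0,…,e-1}` fails in general, but applying
`Ψ` to the pair `(X, (X+e) ∪ {0,…,e-1})` always produces a pair `(Y1,Y2)` with `Y1 ⊆ Y2`. -/
theorem stmt_12 :
    (∃ (X : Finset ℕ) (e : ℕ), 1 ≤ e ∧
      ¬ X ⊆ X.image (fun x => x + e) ∪ Finset.range e) ∧
    (∀ (X : Finset ℕ) (e : ℕ), 1 ≤ e →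
      (Psi e X (X.image (fun x => x + e) ∪ Finset.range e)).1 ⊆
        (Psi e X (X.image (fun x => x + e) ∪ Finset.range e)).2) := by
  constructor
  · refine ⟨{1}, 1, le_refl 1, ?_⟩
    intro h
    have := h (Finset.mem_singleton_self 1)
    simp at this
  · intro X e he y hy
    simp only [Psi, phiImage, List.mem_toFinset] at hy
    have hmem := greedyList_mem_or_zero _ _ _ hy
    simp only [Psi, Finset.mem_union]
    rcases hmem with h | rfl
    · rcases Finset.mem_union.mp h with h | h
      · exact Or.inl (Or.inl h)
      · exact Or.inr h
    · exact Or.inr (Finset.mem_range.mpr he)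
end

section
/- Let λ be an e-regular partition of n obtained from the empty partition via f̃_{i_1} ⋯ f̃_{i_n} (level-1 crystal operators mod e). Then in the level-2 Fock space with bicharge (0,0), applying each operator twice yields the doubled bipartition: (f̃^{(0,0)}_{i_1})² ⋯ (f̃^{(0,0)}_{i_n})² (∅,∅) = (λ, λ). In particular (λ,λ) is an Uglov bipartition for (e,(0,0)). -/
/-- entries of the level-2 reading word contributed by component `c` (with charge `s`)
at content `v` : the (at most one) removable then addable node of that content;
an entry `(x, c, a)` records the letter `x` (`true = A`), the component and the row. -/
def nodeEntries (l : YPartition) (s : ℤ) (c : ℕ) (N : ℕ) (v : ℤ) : List (Bool × ℕ × ℕ) :=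
  (((List.range (N+2)).filter
      (fun a => decide (RemovableRow l a) && decide ((l.parts a : ℤ) - 1 - (a : ℤ) + s = v))).map
    (fun a => (false, c, a))) ++
  (((List.range (N+2)).filter
      (fun a => decide (AddableRow l a) && decide ((l.parts a : ℤ) - (a : ℤ) + s = v))).map
    (fun a => (true, c, a)))

/-- the level-2 reading word of addable/removable `i`-nodes of the bipartition
`(l1,l2)` for the bicharge `(s1,s2)` and quantum characteristic `E` : nodes are read by
increasing content, component 2 before component 1 at equal content. `N` is any bound
with `l1.parts N = 0` (resp. for `l2`). -/
def word2 (E : ℕ) (s1 s2 : ℤ) (i : ZMod E) (l1 l2 : YPartition) (N : ℕ) :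
    List (Bool × ℕ × ℕ) :=
  let lo : ℤ := min s1 s2 - (N : ℤ) - 2
  let hi : ℤ := max s1 s2 + (max (l1.parts 0) (l2.parts 0) : ℕ) + 2
  ((List.range (hi - lo + 1).toNat).map (fun t => lo + t)).flatMap (fun (v : ℤ) =>
    if ((v : ZMod E) = i) then nodeEntries l2 s2 2 N v ++ nodeEntries l1 s1 1 N v else [])

/-- the good addable `i`-node of a bipartition: `(component, row)` of the rightmost `A`
in the reduced level-2 word. -/
def goodAdd2 (E : ℕ) (s1 s2 : ℤ) (i : ZMod E) (l1 l2 : YPartition) (N : ℕ) :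
    Option (ℕ × ℕ) :=
  ((reduceWord (fun x => x.1) (word2 E s1 s2 i l1 l2 N)).reverse.find? (fun x => x.1)).map
    Prod.snd

/-- one step of the level-2 Kashiwara operator `f̃^{(s1,s2)}_{i}` on bipartitions. -/
def FStep2 (E : ℕ) (s1 s2 : ℤ) (i : ZMod E) (P Q : YPartition × YPartition) : Prop :=
  ∃ c a N, P.1.parts N = 0 ∧ P.2.parts N = 0 ∧
    goodAdd2 E s1 s2 i P.1 P.2 N = some (c, a) ∧
    ((c = 1 ∧ Q.1.parts = Function.update P.1.parts a (P.1.parts a + 1) ∧ Q.2 = P.2) ∨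
     (c = 2 ∧ Q.2.parts = Function.update P.2.parts a (P.2.parts a + 1) ∧ Q.1 = P.1))

/-!
For the bicharge `(0,0)` the `i`-nodes of `(μ, μ)` are those of `μ` taken twice, and at equal
content the copy in the second component is read first: the level-2 reading word of `(μ, μ)` is
the level-1 word of `μ` with every letter doubled. Doubling commutes with the cancellation of `RA`
factors, so the good addable `i`-node of `(μ, μ)` is the first-component copy of the good addable
`i`-node of `μ`, and `f̃_i` gives `(μ', μ)`.

In `(μ', μ)` the only change among the `i`-nodes is that this copy `A` has become an `R`: the other
nodes affected by the new box have contents `c ± 1`, of residue `i ± 1 ≠ i` because `e > 1`. Only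
`R`s survive to the right of the good node of `μ`, so after the change the second-component copy
is the rightmost surviving `A`, and the second `f̃_i` gives `(μ', μ')`.
-/

theorem List.eq_of_pairwise_of_mem_iff {α : Type} {r : α → α → Prop} (hr : ∀ a b, r a b → ¬ r b a)
    {l₁ l₂ : List α} (h₁ : l₁.Pairwise r) (h₂ : l₂.Pairwise r) (h : ∀ x, x ∈ l₁ ↔ x ∈ l₂) :
    l₁ = l₂ :=
  have nodup {l : List α} (hl : l.Pairwise r) : l.Nodup :=
    hl.imp fun {a _} hab => by rintro rfl; exact hr a a hab hab
  List.Perm.eq_of_pairwise (fun a b _ _ hab hba => absurd hba (hr a b hab)) h₁ h₂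
    ((List.perm_ext_iff_of_nodup (nodup h₁) (nodup h₂)).mpr h)

section ReduceWord

variable {α : Type} (f : α → Bool)

def cancelStep (x : α) : List α → List α
  | [] => [x]
  | y :: t => if f x = false ∧ f y = true then t else x :: y :: t

def goodLetter (w : List α) : Option α := (reduceWord f w).reverse.find? f

theorem reduceWord_cons (x : α) (w : List α) :
    reduceWord f (x :: w) = cancelStep f x (reduceWord f w) := rfl

theorem reduceWord_append (u w : List α) :
    reduceWord f (u ++ w) = u.foldr (cancelStep f) (reduceWord f w) := by
  induction u with
  | nil => rfl
  | cons x u ih => rw [List.cons_append, reduceWord_cons, ih, List.foldr_cons]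

theorem reduceWord_eq_foldr (w : List α) : reduceWord f w = w.foldr (cancelStep f) [] := by
  induction w with
  | nil => rfl
  | cons x w ih => rw [reduceWord_cons, ih, List.foldr_cons]

theorem cancelStep_of_true {x : α} (hx : f x = true) (r : List α) :
    cancelStep f x r = x :: r := by
  cases r <;> simp [cancelStep, hx]

theorem cancelStep_of_forall_false (x : α) {r : List α} (hr : ∀ y ∈ r, f y = false) :
    cancelStep f x r = x :: r := by
  cases r with
  | nil => rfl
  | cons y t => simp [cancelStep, hr y List.mem_cons_self]

theorem cancelStep_sublist (x : α) (r : List α) : (cancelStep f x r).Sublist (x :: r) := by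
  cases r with
  | nil => exact List.Sublist.refl _
  | cons y t =>
    simp only [cancelStep]
    split_ifs
    · exact (List.sublist_cons_self y t).trans (List.sublist_cons_self x _)
    · exact List.Sublist.refl _

theorem cancelStep_append {r : List α} (hr : r ≠ []) (x : α) (s : List α) :
    cancelStep f x (r ++ s) = cancelStep f x r ++ s := by
  obtain ⟨y, t, rfl⟩ := List.exists_cons_of_ne_nil hr
  simp only [cancelStep, List.cons_append]
  split_ifs <;> rfl

theorem reduceWord_sublist (w : List α) : (reduceWord f w).Sublist w := by
  induction w with
  | nil => exact List.Sublist.refl _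
  | cons x w ih => exact (cancelStep_sublist f x _).trans (ih.cons_cons x)

/-- `cancelStep` only inspects the head of the word, so nothing behind a surviving `z` is ever
looked at. -/
theorem foldr_cancelStep_cons_of_mem {z : α} {u X : List α} (hzu : z ∉ u) (hzX : z ∉ X)
    (hz : z ∈ u.foldr (cancelStep f) (z :: X)) :
    ∃ Q, ∀ Y, u.foldr (cancelStep f) (z :: Y) = Q ++ z :: Y := by
  induction u with
  | nil => exact ⟨[], fun Y => rfl⟩
  | cons x u ih =>
    have hxz : z ≠ x := fun h => hzu (h ▸ List.mem_cons_self)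
    have hzu' : z ∉ u := fun h => hzu (List.mem_cons_of_mem x h)
    have hz' : z ∈ u.foldr (cancelStep f) (z :: X) := by
      rcases List.mem_cons.mp ((cancelStep_sublist f x _).subset hz) with h | h
      · exact absurd h hxz
      · exact h
    obtain ⟨Q, hQ⟩ := ih hzu' hz'
    simp only [List.foldr_cons, hQ] at hz ⊢
    rcases Q with _ | ⟨q, Q⟩
    · by_cases hc : f x = false ∧ f z = true
      · simp [cancelStep, hc] at hz
        exact absurd hz hzX
      · exact ⟨[x], fun Y => by simp [cancelStep, hc]⟩
    · exact ⟨cancelStep f x (q :: Q), fun Y => cancelStep_append f (List.cons_ne_nil q Q) x _⟩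

theorem find?_reverse_append_cons {z : α} (hz : f z = true) (Q : List α) {Y : List α}
    (hY : ∀ y ∈ Y, f y = false) : (Q ++ z :: Y).reverse.find? f = some z := by
  rw [List.reverse_append, List.reverse_cons, List.append_assoc, List.find?_append,
    List.find?_eq_none.mpr (fun y hy => by simp [hY y (List.mem_reverse.mp hy)])]
  simp [hz]

theorem forall_false_of_find?_reverse_append_cons {z : α} {Q Y : List α} (hzY : z ∉ Y)
    (h : (Q ++ z :: Y).reverse.find? f = some z) : ∀ y ∈ Y, f y = false := by
  intro y hy
  by_contra hfy
  rw [List.reverse_append, List.reverse_cons, List.append_assoc, List.find?_append] at h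
  obtain ⟨y', hy'⟩ : ∃ y', Y.reverse.find? f = some y' :=
    Option.ne_none_iff_exists'.mp (List.find?_eq_none.not.mpr
      (fun h' => h' y (List.mem_reverse.mpr hy) (by simpa using hfy)))
  rw [hy', Option.some_or, Option.some_inj] at h
  exact hzY (h ▸ List.mem_reverse.mp (List.mem_of_find?_eq_some hy'))

variable {f} in
theorem goodLetter_mem {w : List α} {z : α} (h : goodLetter f w = some z) : z ∈ w :=
  (reduceWord_sublist f w).subset (List.mem_reverse.mp (List.mem_of_find?_eq_some h))

end ReduceWord

section DoubleWord

variable {α β : Type} (g₂ g₁ : α → β)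

def doubleWord (w : List α) : List β := w.flatMap fun x => [g₂ x, g₁ x]

@[simp] theorem doubleWord_nil : doubleWord g₂ g₁ [] = [] := rfl

@[simp] theorem doubleWord_cons (x : α) (w : List α) :
    doubleWord g₂ g₁ (x :: w) = g₂ x :: g₁ x :: doubleWord g₂ g₁ w := rfl

theorem doubleWord_append (u w : List α) :
    doubleWord g₂ g₁ (u ++ w) = doubleWord g₂ g₁ u ++ doubleWord g₂ g₁ w :=
  List.flatMap_append

theorem mem_doubleWord {b : β} {w : List α} :
    b ∈ doubleWord g₂ g₁ w ↔ ∃ x ∈ w, b = g₂ x ∨ b = g₁ x := by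
  simp [doubleWord]

theorem not_mem_doubleWord {z : α} {w : List α} (hg₂ : g₂.Injective)
    (hg₁₂ : ∀ x y, g₁ x ≠ g₂ y) (hz : z ∉ w) : g₂ z ∉ doubleWord g₂ g₁ w := by
  rw [mem_doubleWord]
  rintro ⟨x, hx, h | h⟩
  · exact hz (hg₂ h ▸ hx)
  · exact hg₁₂ x z h.symm

theorem map_append_map_eq_doubleWord {L : List α}
    (hL : L.Pairwise fun _ _ => False) : L.map g₂ ++ L.map g₁ = doubleWord g₂ g₁ L := by
  rcases L with _ | ⟨x, _ | ⟨y, L⟩⟩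
  · rfl
  · rfl
  · exact (List.rel_of_pairwise_cons hL List.mem_cons_self).elim

theorem doubleWord_flatMap {γ : Type} (L : List γ) (F : γ → List α) :
    doubleWord g₂ g₁ (L.flatMap F) = L.flatMap fun c => doubleWord g₂ g₁ (F c) :=
  List.flatMap_assoc

variable {f : α → Bool} {f₂ : β → Bool} {g₂ g₁}

theorem forall_false_doubleWord (hg₂ : ∀ x, f₂ (g₂ x) = f x) (hg₁ : ∀ x, f₂ (g₁ x) = f x)
    {r : List α} (hr : ∀ x ∈ r, f x = false) : ∀ b ∈ doubleWord g₂ g₁ r, f₂ b = false := by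
  intro b hb
  obtain ⟨x, hx, rfl | rfl⟩ := (mem_doubleWord g₂ g₁).mp hb
  · rw [hg₂, hr x hx]
  · rw [hg₁, hr x hx]

theorem cancelStep_cancelStep_doubleWord (hg₂ : ∀ x, f₂ (g₂ x) = f x)
    (hg₁ : ∀ x, f₂ (g₁ x) = f x) (x : α) (r : List α) :
    cancelStep f₂ (g₂ x) (cancelStep f₂ (g₁ x) (doubleWord g₂ g₁ r))
      = doubleWord g₂ g₁ (cancelStep f x r) := by
  rcases r with _ | ⟨y, r⟩
  · cases hx : f x <;> simp [cancelStep, hg₂, hg₁, hx]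
  · cases hx : f x <;> cases hy : f y <;> simp [cancelStep, hg₂, hg₁, hx, hy]

theorem foldr_cancelStep_doubleWord (hg₂ : ∀ x, f₂ (g₂ x) = f x)
    (hg₁ : ∀ x, f₂ (g₁ x) = f x) (u r : List α) :
    (doubleWord g₂ g₁ u).foldr (cancelStep f₂) (doubleWord g₂ g₁ r)
      = doubleWord g₂ g₁ (u.foldr (cancelStep f) r) := by
  induction u with
  | nil => rfl
  | cons x u ih =>
    simp only [doubleWord_cons, List.foldr_cons, ih, cancelStep_cancelStep_doubleWord hg₂ hg₁]

theorem reduceWord_doubleWord (hg₂ : ∀ x, f₂ (g₂ x) = f x)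
    (hg₁ : ∀ x, f₂ (g₁ x) = f x) (w : List α) :
    reduceWord f₂ (doubleWord g₂ g₁ w) = doubleWord g₂ g₁ (reduceWord f w) := by
  simpa [reduceWord_eq_foldr] using foldr_cancelStep_doubleWord hg₂ hg₁ w []

theorem find?_reverse_doubleWord (hg₂ : ∀ x, f₂ (g₂ x) = f x)
    (hg₁ : ∀ x, f₂ (g₁ x) = f x) (r : List α) :
    (doubleWord g₂ g₁ r).reverse.find? f₂ = (r.reverse.find? f).map g₁ := by
  induction r with
  | nil => rfl
  | cons x r ih =>
    simp only [doubleWord_cons, List.reverse_cons, List.find?_append, ih]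
    cases r.reverse.find? f <;> cases hx : f x <;> simp [hx, hg₁, hg₂]

theorem goodLetter_doubleWord (hg₂ : ∀ x, f₂ (g₂ x) = f x)
    (hg₁ : ∀ x, f₂ (g₁ x) = f x) (w : List α) :
    goodLetter f₂ (doubleWord g₂ g₁ w) = (goodLetter f w).map g₁ := by
  rw [goodLetter, reduceWord_doubleWord hg₂ hg₁, find?_reverse_doubleWord hg₂ hg₁]
  rfl

/-- Only `R`s survive behind the good letter `z`, and in front of it the doubled word cancels as
the original one does. -/
theorem goodLetter_doubleWord_defect (hg₂ : ∀ x, f₂ (g₂ x) = f x)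
    (hg₁ : ∀ x, f₂ (g₁ x) = f x) (hinj : g₂.Injective) (hg₁₂ : ∀ x y, g₁ x ≠ g₂ y)
    {u t : List α} {z : α} {y : β} (hzu : z ∉ u) (hzt : z ∉ t) (hy : f₂ y = false)
    (hgood : goodLetter f (u ++ z :: t) = some z) :
    goodLetter f₂ (doubleWord g₂ g₁ u ++ g₂ z :: y :: doubleWord g₂ g₁ t) = some (g₂ z) := by
  have hz : f z = true := List.find?_some hgood
  set r := reduceWord f t
  have hzr : z ∉ r := fun h => hzt ((reduceWord_sublist f t).subset h)
  have hred : reduceWord f (u ++ z :: t) = u.foldr (cancelStep f) (z :: r) := by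
    rw [reduceWord_append, reduceWord_cons, cancelStep_of_true f hz]
  obtain ⟨Q, hQ⟩ := foldr_cancelStep_cons_of_mem f hzu hzr
    (hred ▸ List.mem_reverse.mp (List.mem_of_find?_eq_some hgood))
  have hr : ∀ x ∈ r, f x = false :=
    forall_false_of_find?_reverse_append_cons f hzr (by rw [← hQ r, ← hred]; exact hgood)
  have hz₂ : f₂ (g₂ z) = true := by rw [hg₂, hz]
  have hred₂ : reduceWord f₂ (doubleWord g₂ g₁ u ++ g₂ z :: y :: doubleWord g₂ g₁ t)
      = (doubleWord g₂ g₁ u).foldr (cancelStep f₂) (g₂ z :: y :: doubleWord g₂ g₁ r) := by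
    rw [reduceWord_append, reduceWord_cons, reduceWord_cons, reduceWord_doubleWord hg₂ hg₁,
      cancelStep_of_forall_false f₂ y (forall_false_doubleWord hg₂ hg₁ hr),
      cancelStep_of_true f₂ hz₂]
  have hsurv : g₂ z ∈ (doubleWord g₂ g₁ u).foldr (cancelStep f₂)
      (g₂ z :: g₁ z :: doubleWord g₂ g₁ r) := by
    rw [← doubleWord_cons, foldr_cancelStep_doubleWord hg₂ hg₁, hQ]
    simp [doubleWord_append]
  obtain ⟨Q₂, hQ₂⟩ := foldr_cancelStep_cons_of_mem f₂ (not_mem_doubleWord g₂ g₁ hinj hg₁₂ hzu)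
    (by simpa [(hg₁₂ z z).symm] using not_mem_doubleWord g₂ g₁ hinj hg₁₂ hzr) hsurv
  rw [goodLetter, hred₂, hQ₂]
  exact find?_reverse_append_cons f₂ hz₂ Q₂ (by
    simpa [hy] using forall_false_doubleWord hg₂ hg₁ hr)

end DoubleWord

section Contents

variable {l : YPartition} {r s N : ℕ}

def remContent (l : YPartition) (r : ℕ) : ℤ := (l.parts r : ℤ) - 1 - r

def addContent (l : YPartition) (r : ℕ) : ℤ := (l.parts r : ℤ) - r

theorem remContent_add_one (l : YPartition) (r : ℕ) : remContent l r + 1 = addContent l r := by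
  unfold remContent addContent; ring

theorem parts_eq_zero_of_le (hN : l.parts N = 0) (hr : N ≤ r) : l.parts r = 0 :=
  Nat.le_zero.mp (hN ▸ l.antitone hr)

theorem RemovableRow.lt_of_parts_eq_zero (hr : RemovableRow l r) (hN : l.parts N = 0) : r < N := by
  by_contra! h
  have := parts_eq_zero_of_le hN h
  unfold RemovableRow at hr; omega

theorem AddableRow.le_of_parts_eq_zero (hr : AddableRow l r) (hN : l.parts N = 0) : r ≤ N := by
  by_contra! h
  rcases hr with rfl | hr
  · omega
  · have := parts_eq_zero_of_le hN (show N ≤ r - 1 by omega); omega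

theorem remContent_lt_remContent (h : r < s) : remContent l s < remContent l r := by
  have := l.antitone h.le
  unfold remContent; omega

theorem addContent_lt_remContent (h : r < s) (hs : AddableRow l s) :
    addContent l s < remContent l r := by
  rcases hs with rfl | hs
  · omega
  · have := l.antitone (show r ≤ s - 1 by omega)
    unfold addContent remContent; omega

theorem remContent_ne_addContent (hs : AddableRow l s) :
    remContent l r ≠ addContent l s := by
  rcases lt_trichotomy r s with h | rfl | h
  · have := addContent_lt_remContent h hs; omega
  · have := remContent_add_one l r; omega
  · have := remContent_lt_remContent (l := l) h
    have := remContent_add_one l s; omega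

theorem addContent_injOn (hr : AddableRow l r) (hs : AddableRow l s)
    (h : addContent l r = addContent l s) : r = s := by
  by_contra hne
  rcases Nat.lt_or_gt_of_ne hne with hlt | hlt
  · have := addContent_lt_remContent hlt hs
    have := remContent_add_one l r; omega
  · have := addContent_lt_remContent hlt hr
    have := remContent_add_one l s; omega

end Contents

section Entries

variable {l : YPartition} {N : ℕ} {x y : Bool × ℕ}

def IsNode (l : YPartition) (x : Bool × ℕ) : Prop :=
  if x.1 then AddableRow l x.2 else RemovableRow l x.2

def entryContent (l : YPartition) (x : Bool × ℕ) : ℤ :=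
  if x.1 then addContent l x.2 else remContent l x.2

theorem IsNode.snd_le (hx : IsNode l x) (hN : l.parts N = 0) : x.2 ≤ N := by
  rcases x with ⟨_ | _, r⟩ <;> simp only [IsNode] at hx
  · exact (hx.lt_of_parts_eq_zero hN).le
  · exact hx.le_of_parts_eq_zero hN

theorem entryContent_lt_remContent (hx : IsNode l x) {r : ℕ} (h : r < x.2) :
    entryContent l x < remContent l r := by
  rcases x with ⟨_ | _, s⟩ <;> simp only [IsNode, entryContent] at hx ⊢
  · exact remContent_lt_remContent h
  · exact addContent_lt_remContent h hx

theorem remContent_le_entryContent (l : YPartition) (x : Bool × ℕ) :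
    remContent l x.2 ≤ entryContent l x := by
  rcases x with ⟨_ | _, s⟩ <;> simp only [entryContent, Bool.false_eq_true, ↓reduceIte]
  · exact le_rfl
  · linarith [remContent_add_one l s]

theorem entryContent_lt_entryContent (hx : IsNode l x) (h : y.2 < x.2) :
    entryContent l x < entryContent l y :=
  (entryContent_lt_remContent hx h).trans_le (remContent_le_entryContent l y)

theorem IsNode.eq_of_entryContent_eq (hx : IsNode l x) (hy : IsNode l y)
    (h : entryContent l x = entryContent l y) : x = y := by
  rcases x with ⟨_ | _, r⟩ <;> rcases y with ⟨_ | _, s⟩ <;>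
    simp only [IsNode, entryContent] at hx hy h
  · rcases lt_trichotomy r s with hrs | rfl | hrs
    · exact absurd h (remContent_lt_remContent hrs).ne'
    · rfl
    · exact absurd h (remContent_lt_remContent hrs).ne
  · exact absurd h (remContent_ne_addContent hy)
  · exact absurd h.symm (remContent_ne_addContent hx)
  · rw [addContent_injOn hx hy h]

end Entries

section Word1

variable {e : ℕ} {i : ZMod e} {l : YPartition} {N : ℕ}

theorem mem_word1 {x : Bool × ℕ} :
    x ∈ word1 e i l N ↔ x.2 < N + 2 ∧ IsNode l x ∧ (entryContent l x : ZMod e) = i := by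
  rcases x with ⟨_ | _, r⟩ <;>
    simp [word1, IsNode, entryContent, remRes, addRes, remContent, addContent]

theorem pairwise_word1 :
    (word1 e i l N).Pairwise (fun x y => entryContent l x < entryContent l y) := by
  rw [word1, List.pairwise_flatMap, List.pairwise_reverse]
  refine ⟨fun a _ => ?_, List.pairwise_lt_range.imp fun hab x hx y hy => ?_⟩
  · split_ifs <;> simp [entryContent, ← remContent_add_one]
  · simp only [List.mem_append, List.mem_ite_nil_right, List.mem_singleton] at hx hy
    rcases hx with ⟨⟨h, -⟩, rfl⟩ | ⟨⟨h, -⟩, rfl⟩ <;> rcases hy with ⟨-, rfl⟩ | ⟨-, rfl⟩ <;>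
      exact entryContent_lt_entryContent h hab

theorem eq_word1_of_pairwise (hN : l.parts N = 0) {L : List (Bool × ℕ)}
    (hL : L.Pairwise (fun x y => entryContent l x < entryContent l y))
    (hmem : ∀ x, x ∈ L ↔ IsNode l x ∧ (entryContent l x : ZMod e) = i) : L = word1 e i l N := by
  refine List.eq_of_pairwise_of_mem_iff (fun _ _ h h' => (h.trans h').false) hL pairwise_word1
    fun x => ?_
  rw [hmem, mem_word1]
  exact ⟨fun h => ⟨by have := h.1.snd_le hN; omega, h⟩, fun h => h.2⟩

theorem word1_eq_of_parts_eq_zero {M : ℕ} (hN : l.parts N = 0) (hM : l.parts M = 0) :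
    word1 e i l M = word1 e i l N :=
  eq_word1_of_pairwise hN pairwise_word1 fun x => by
    rw [mem_word1]
    exact ⟨fun h => h.2, fun h => ⟨by have := h.1.snd_le hM; omega, h⟩⟩

end Word1

def intInterval (lo hi : ℤ) : List ℤ := (List.range (hi - lo + 1).toNat).map fun t : ℕ => lo + t

theorem mem_intInterval {lo hi v : ℤ} : v ∈ intInterval lo hi ↔ lo ≤ v ∧ v ≤ hi := by
  simp only [intInterval, List.mem_map, List.mem_range]
  constructor
  · rintro ⟨t, ht, rfl⟩; omega
  · intro h; exact ⟨(v - lo).toNat, by omega, by omega⟩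

theorem pairwise_lt_intInterval (lo hi : ℤ) : (intInterval lo hi).Pairwise (· < ·) :=
  List.pairwise_map.mpr (List.pairwise_lt_range.imp fun h => by omega)

section EntriesOfContent

variable {e : ℕ} {i : ZMod e} {l : YPartition} {N : ℕ} {v : ℤ}

def entriesOfContent (l : YPartition) (N : ℕ) (v : ℤ) : List (Bool × ℕ) :=
  ((List.range (N + 2)).filter fun r =>
      decide (RemovableRow l r) && decide (remContent l r = v)).map (false, ·) ++
  ((List.range (N + 2)).filter fun r =>
      decide (AddableRow l r) && decide (addContent l r = v)).map (true, ·)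

theorem mem_entriesOfContent {x : Bool × ℕ} :
    x ∈ entriesOfContent l N v ↔ x.2 < N + 2 ∧ IsNode l x ∧ entryContent l x = v := by
  rcases x with ⟨_ | _, r⟩ <;> simp [entriesOfContent, IsNode, entryContent]

theorem pairwise_false_entriesOfContent :
    (entriesOfContent l N v).Pairwise fun _ _ => False := by
  have hnodup : (entriesOfContent l N v).Nodup := by
    refine List.Nodup.append ((List.nodup_range.filter _).map fun _ _ h => by simpa using h)
      ((List.nodup_range.filter _).map fun _ _ h => by simpa using h) ?_
    simp [List.disjoint_left]
  refine hnodup.imp_of_mem fun hxL hyL hne => hne ?_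
  obtain ⟨-, hx, rfl⟩ := mem_entriesOfContent.mp hxL
  obtain ⟨-, hy, hxy⟩ := mem_entriesOfContent.mp hyL
  exact hx.eq_of_entryContent_eq hy hxy.symm

theorem entriesOfContent_eq_singleton {z : Bool × ℕ} (hz : IsNode l z) (hzN : z.2 < N + 2) :
    entriesOfContent l N (entryContent l z) = [z] := by
  refine List.eq_of_pairwise_of_mem_iff (fun _ _ h => h.elim) pairwise_false_entriesOfContent
    (List.pairwise_singleton _ _) fun x => ?_
  rw [mem_entriesOfContent, List.mem_singleton]
  constructor
  · rintro ⟨-, hx, hxz⟩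
    exact hx.eq_of_entryContent_eq hz hxz
  · rintro rfl
    exact ⟨hzN, hz, rfl⟩

theorem entryContent_le_addContent (l : YPartition) (x : Bool × ℕ) :
    entryContent l x ≤ addContent l x.2 := by
  rcases x with ⟨_ | _, s⟩ <;> simp only [entryContent, Bool.false_eq_true, ↓reduceIte]
  · linarith [remContent_add_one l s]
  · exact le_rfl

theorem word1_eq_flatMap_entriesOfContent (hN : l.parts N = 0) {lo hi : ℤ}
    (hlo : lo ≤ -(N : ℤ) - 2) (hhi : (l.parts 0 : ℤ) ≤ hi) :
    word1 e i l N = (intInterval lo hi).flatMap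
      fun v : ℤ => if (v : ZMod e) = i then entriesOfContent l N v else [] := by
  refine (eq_word1_of_pairwise hN (List.pairwise_flatMap.mpr ⟨fun v _ => ?_, ?_⟩) fun x => ?_).symm
  · split_ifs
    · exact pairwise_false_entriesOfContent.imp False.elim
    · exact List.Pairwise.nil
  · refine (pairwise_lt_intInterval lo hi).imp fun hvw x hx y hy => ?_
    rw [List.mem_ite_nil_right, mem_entriesOfContent] at hx hy
    rw [hx.2.2.2, hy.2.2.2]
    exact hvw
  · simp only [List.mem_flatMap, List.mem_ite_nil_right, mem_entriesOfContent, mem_intInterval]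
    constructor
    · rintro ⟨v, -, hv, -, hx, rfl⟩
      exact ⟨hx, hv⟩
    · rintro ⟨hx, hv⟩
      have hxN := hx.snd_le hN
      have hlow := remContent_le_entryContent l x
      have hhigh := entryContent_le_addContent l x
      have hparts := l.antitone (Nat.zero_le x.2)
      refine ⟨entryContent l x, ⟨?_, ?_⟩, hv, by omega, hx, rfl⟩
      · unfold remContent at hlow; omega
      · unfold addContent at hhigh; omega

end EntriesOfContent

theorem intCast_add_one_ne_intCast {e : ℕ} (he : 1 < e) (w : ℤ) :
    ((w + 1 : ℤ) : ZMod e) ≠ (w : ZMod e) := by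
  have : Fact (1 < e) := ⟨he⟩
  push_cast
  simp

section AddNode

variable {l l' : YPartition} {a N : ℕ} {v : ℤ}

theorem parts_update_self (hup : l'.parts = Function.update l.parts a (l.parts a + 1)) :
    l'.parts a = l.parts a + 1 := by
  rw [hup, Function.update_self]

theorem parts_update_of_ne (hup : l'.parts = Function.update l.parts a (l.parts a + 1))
    {r : ℕ} (hr : r ≠ a) : l'.parts r = l.parts r := by
  rw [hup, Function.update_of_ne hr]

theorem removableRow_update_iff (hup : l'.parts = Function.update l.parts a (l.parts a + 1))
    (hv : v ≠ addContent l a - 1 ∧ v ≠ addContent l a ∧ v ≠ addContent l a + 1) (r : ℕ) :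
    RemovableRow l' r ∧ remContent l' r = v ↔ RemovableRow l r ∧ remContent l r = v := by
  have hpa := parts_update_self hup
  unfold RemovableRow remContent addContent at *
  rcases eq_or_ne r a with rfl | hra
  · omega
  rcases eq_or_ne (r + 1) a with rfl | hra'
  · rw [parts_update_of_ne hup hra]; omega
  · rw [parts_update_of_ne hup hra, parts_update_of_ne hup hra']

theorem addableRow_update_iff (hup : l'.parts = Function.update l.parts a (l.parts a + 1))
    (hv : v ≠ addContent l a - 1 ∧ v ≠ addContent l a ∧ v ≠ addContent l a + 1) (r : ℕ) :
    AddableRow l' r ∧ addContent l' r = v ↔ AddableRow l r ∧ addContent l r = v := by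
  have hpa := parts_update_self hup
  unfold AddableRow addContent at *
  rcases eq_or_ne r a with rfl | hra
  · omega
  rcases eq_or_ne r (a + 1) with rfl | hra'
  · rw [parts_update_of_ne hup hra, Nat.add_sub_cancel]; omega
  · rw [parts_update_of_ne hup hra, parts_update_of_ne hup (show r - 1 ≠ a by omega)]

theorem entriesOfContent_update (hup : l'.parts = Function.update l.parts a (l.parts a + 1))
    (hv : v ≠ addContent l a - 1 ∧ v ≠ addContent l a ∧ v ≠ addContent l a + 1) :
    entriesOfContent l' N v = entriesOfContent l N v := by
  refine List.eq_of_pairwise_of_mem_iff (fun _ _ h => h.elim) pairwise_false_entriesOfContent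
    pairwise_false_entriesOfContent fun x => ?_
  simp only [mem_entriesOfContent, and_congr_right_iff]
  intro _
  rcases x with ⟨_ | _, r⟩ <;> simp only [IsNode, entryContent, Bool.false_eq_true, ↓reduceIte]
  · exact removableRow_update_iff hup hv r
  · exact addableRow_update_iff hup hv r

theorem entriesOfContent_update_of_intCast_eq {e : ℕ} {i : ZMod e} (he : 1 < e)
    (hup : l'.parts = Function.update l.parts a (l.parts a + 1))
    (hres : (addContent l a : ZMod e) = i) (hvi : (v : ZMod e) = i) (hva : v ≠ addContent l a) :
    entriesOfContent l' N v = entriesOfContent l N v := by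
  refine entriesOfContent_update hup ⟨?_, hva, ?_⟩ <;> rintro rfl
  · exact intCast_add_one_ne_intCast he _ (by rw [sub_add_cancel, hres, hvi])
  · exact intCast_add_one_ne_intCast he _ (by rw [hres, hvi])

theorem entriesOfContent_update_addContent
    (hup : l'.parts = Function.update l.parts a (l.parts a + 1)) (haN : a < N + 2) :
    entriesOfContent l' N (addContent l a) = [(false, a)] := by
  have hR : RemovableRow l' a := by
    have := l.antitone a.le_succ
    show l'.parts (a + 1) < l'.parts a
    rw [parts_update_self hup, parts_update_of_ne hup a.succ_ne_self]; omega
  have hc : entryContent l' (false, a) = addContent l a := by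
    show remContent l' a = addContent l a
    rw [← remContent_add_one, remContent, remContent, parts_update_self hup]; push_cast; ring
  rw [← hc]
  exact entriesOfContent_eq_singleton (z := (false, a)) hR haN

end AddNode

section LevelTwo

def toComponent (c : ℕ) (x : Bool × ℕ) : Bool × ℕ × ℕ := (x.1, c, x.2)

theorem toComponent_injective (c : ℕ) : (toComponent c).Injective := fun x y h => by
  simp only [toComponent, Prod.mk.injEq] at h
  exact Prod.ext h.1 h.2.2

theorem nodeEntries_eq_map (l : YPartition) (c N : ℕ) (v : ℤ) :
    nodeEntries l 0 c N v = (entriesOfContent l N v).map (toComponent c) := by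
  simp only [nodeEntries, entriesOfContent, remContent, addContent, toComponent, add_zero,
    List.map_append, List.map_map, Function.comp_def]
  rfl

theorem word2_zero_zero (E : ℕ) (i : ZMod E) (l₁ l₂ : YPartition) (N : ℕ) :
    word2 E 0 0 i l₁ l₂ N = (intInterval (-(N : ℤ) - 2)
      (max (l₁.parts 0 : ℤ) (l₂.parts 0) + 2)).flatMap
      fun v : ℤ => if (v : ZMod E) = i then
        (entriesOfContent l₂ N v).map (toComponent 2) ++
          (entriesOfContent l₁ N v).map (toComponent 1)
      else [] := by
  simp only [word2, nodeEntries_eq_map, min_self, max_self, zero_sub, zero_add]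
  congr 1
  -- in `word2` the range of naturals is coerced to `List ℤ` through the list monad
  simp [intInterval, ← List.map_eq_flatMap, List.map_map, Function.comp_def]

theorem word2_self {e : ℕ} {i : ZMod e} {l : YPartition} {N : ℕ} (hN : l.parts N = 0) :
    word2 e 0 0 i l l N = doubleWord (toComponent 2) (toComponent 1) (word1 e i l N) := by
  rw [word2_zero_zero, max_self,
    word1_eq_flatMap_entriesOfContent (hi := l.parts 0 + 2) hN le_rfl (by omega),
    doubleWord_flatMap]
  congr 1
  funext v
  split_ifs
  · exact map_append_map_eq_doubleWord _ _ pairwise_false_entriesOfContent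
  · rfl

theorem exists_word1_eq_append_and_word2_eq {e : ℕ} {i : ZMod e} {l l' : YPartition} {a N : ℕ}
    (he : 1 < e) (hN : l.parts N = 0) (hA : AddableRow l a)
    (hres : (addContent l a : ZMod e) = i)
    (hup : l'.parts = Function.update l.parts a (l.parts a + 1)) :
    ∃ u t, word1 e i l N = u ++ (true, a) :: t ∧
      word2 e 0 0 i l' l N = doubleWord (toComponent 2) (toComponent 1) u ++
        (true, 2, a) :: (false, 1, a) :: doubleWord (toComponent 2) (toComponent 1) t := by
  set B : ℤ → List (Bool × ℕ) := fun v => if (v : ZMod e) = i then entriesOfContent l N v else []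
  have haN : a < N + 2 := by have := hA.le_of_parts_eq_zero hN; omega
  have hca :
      addContent l a ∈ intInterval (-(N : ℤ) - 2) (max (l'.parts 0 : ℤ) (l.parts 0) + 2) := by
    have := l.antitone (Nat.zero_le a)
    have := hA.le_of_parts_eq_zero hN
    exact mem_intInterval.mpr ⟨by unfold addContent; omega, by unfold addContent; omega⟩
  obtain ⟨I₁, I₂, hI⟩ := List.append_of_mem hca
  have hnotmem : addContent l a ∉ I₁ ++ I₂ := by
    have hnd : (I₁ ++ addContent l a :: I₂).Nodup := hI ▸ (pairwise_lt_intInterval _ _).imp ne_of_lt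
    exact (List.nodup_cons.mp (List.nodup_middle.mp hnd)).1
  have hl : entriesOfContent l N (addContent l a) = [(true, a)] :=
    entriesOfContent_eq_singleton (z := (true, a)) hA haN
  have hfar : ∀ v ∈ I₁ ++ I₂, (if (v : ZMod e) = i then
      (entriesOfContent l N v).map (toComponent 2) ++ (entriesOfContent l' N v).map (toComponent 1)
      else []) = doubleWord (toComponent 2) (toComponent 1) (B v) := by
    intro v hv
    simp only [B]
    split_ifs with hvi
    · rw [entriesOfContent_update_of_intCast_eq he hup hres hvi fun h => hnotmem (h ▸ hv)]
      exact map_append_map_eq_doubleWord _ _ pairwise_false_entriesOfContent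
    · rfl
  refine ⟨I₁.flatMap B, I₂.flatMap B, ?_, ?_⟩
  · rw [word1_eq_flatMap_entriesOfContent (hi := max (l'.parts 0 : ℤ) (l.parts 0) + 2) hN le_rfl
      (by omega), hI, List.flatMap_append, List.flatMap_cons, if_pos hres, hl]
    rfl
  · rw [word2_zero_zero, hI, List.flatMap_append, List.flatMap_cons, if_pos hres, hl,
      entriesOfContent_update_addContent hup haN, doubleWord_flatMap, doubleWord_flatMap,
      List.flatMap_congr fun v hv => hfar v (List.mem_append_left I₂ hv),
      List.flatMap_congr fun v hv => hfar v (List.mem_append_right I₁ hv)]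
    rfl

end LevelTwo

section Crystal

variable {e : ℕ} {i : ZMod e} {l l' : YPartition} {a N : ℕ}

theorem goodLetter_word1_of_goodAddRow (h : goodAddRow e i l N = some a) :
    goodLetter Prod.fst (word1 e i l N) = some (true, a) := by
  obtain ⟨z, hz, rfl⟩ := Option.map_eq_some_iff.mp h
  have hz1 : z.1 = true := List.find?_some hz
  exact hz.trans (congrArg some (Prod.ext hz1 rfl))

theorem addableRow_of_goodAddRow (h : goodAddRow e i l N = some a) :
    AddableRow l a ∧ (addContent l a : ZMod e) = i :=
  (mem_word1.mp (goodLetter_mem (goodLetter_word1_of_goodAddRow h))).2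

theorem goodAdd2_self (hN : l.parts N = 0) (h : goodAddRow e i l N = some a) :
    goodAdd2 e 0 0 i l l N = some (1, a) := by
  change (goodLetter Prod.fst (word2 e 0 0 i l l N)).map Prod.snd = _
  rw [word2_self hN, goodLetter_doubleWord (f := Prod.fst) (f₂ := Prod.fst) (g₂ := toComponent 2)
    (g₁ := toComponent 1) (fun _ => rfl) (fun _ => rfl),
    goodLetter_word1_of_goodAddRow h]
  rfl

theorem goodAdd2_update (he : 1 < e) (hN : l.parts N = 0)
    (hup : l'.parts = Function.update l.parts a (l.parts a + 1))
    (h : goodAddRow e i l N = some a) : goodAdd2 e 0 0 i l' l N = some (2, a) := by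
  obtain ⟨hA, hres⟩ := addableRow_of_goodAddRow h
  obtain ⟨u, t, hw, hw₂⟩ := exists_word1_eq_append_and_word2_eq he hN hA hres hup
  have hnd : ((true, a) :: (u ++ t)).Nodup :=
    List.nodup_middle.mp (hw ▸ pairwise_word1.imp fun h => ne_of_apply_ne (entryContent l) h.ne)
  have hzut := List.nodup_cons.mp hnd
  change (goodLetter Prod.fst (word2 e 0 0 i l' l N)).map Prod.snd = _
  rw [hw₂]
  exact congrArg (Option.map Prod.snd) (goodLetter_doubleWord_defect (f := Prod.fst)
    (f₂ := Prod.fst) (g₂ := toComponent 2) (g₁ := toComponent 1) (y := (false, 1, a))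
    (fun _ => rfl) (fun _ => rfl) (toComponent_injective 2)
    (fun _ _ h => by simp [toComponent] at h)
    (fun h => hzut.1 (List.mem_append_left t h)) (fun h => hzut.1 (List.mem_append_right u h))
    rfl (hw ▸ goodLetter_word1_of_goodAddRow h))

theorem fStep2_self {P Q : YPartition} (h : FStep1 e i P Q) : FStep2 e 0 0 i (P, P) (Q, P) := by
  obtain ⟨a, N, hN, hgood, hQ⟩ := h
  exact ⟨1, a, N, hN, hN, goodAdd2_self hN hgood, Or.inl ⟨rfl, hQ, rfl⟩⟩

theorem fStep2_update (he : 1 < e) {P Q : YPartition} (h : FStep1 e i P Q) :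
    FStep2 e 0 0 i (Q, P) (Q, Q) := by
  obtain ⟨a, N, hN, hgood, hQ⟩ := h
  have haN := (addableRow_of_goodAddRow hgood).1.le_of_parts_eq_zero hN
  have hPN : P.parts (N + 1) = 0 := parts_eq_zero_of_le hN N.le_succ
  have hQN : Q.parts (N + 1) = 0 := by rw [hQ, Function.update_of_ne (by omega)]; exact hPN
  have hgood' : goodAddRow e i P (N + 1) = some a := by
    rw [goodAddRow, word1_eq_of_parts_eq_zero hN hPN]; exact hgood
  exact ⟨2, a, N + 1, hQN, hPN, goodAdd2_update he hPN hQ hgood', Or.inr ⟨rfl, hQ, rfl⟩⟩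

end Crystal

theorem stmt_15_general (e n : ℕ) (he : 1 < e) (l : YPartition)
    (res : ℕ → ℤ) (seq : ℕ → YPartition)
    (h0 : seq 0 = emptyP) (hn : seq n = l)
    (hstep : ∀ t, t < n → FStep1 e ((res t : ℤ) : ZMod e) (seq t) (seq (t+1))) :
    ∃ bseq : ℕ → YPartition × YPartition,
      bseq 0 = (emptyP, emptyP) ∧ bseq (2*n) = (l, l) ∧
      ∀ t, t < 2*n →
        FStep2 e 0 0 ((res (t/2) : ℤ) : ZMod e) (bseq t) (bseq (t+1)) := by
  refine ⟨fun t => (seq ((t + 1) / 2), seq (t / 2)), by simp [h0], ?_, fun t ht => ?_⟩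
  · simp only [show (2 * n + 1) / 2 = n by omega, show 2 * n / 2 = n by omega, hn]
  obtain ⟨u, rfl | rfl⟩ := Nat.even_or_odd' t
  · simp only [show (2 * u + 1) / 2 = u by omega, show 2 * u / 2 = u by omega,
      show (2 * u + 1 + 1) / 2 = u + 1 by omega]
    exact fStep2_self (hstep u (by omega))
  · simp only [show (2 * u + 1 + 1) / 2 = u + 1 by omega, show (2 * u + 1) / 2 = u by omega,
      show (2 * u + 1 + 1 + 1) / 2 = u + 1 by omega]
    exact fStep2_update he (hstep u (by omega))

/-- if the `e`-regular partition `λ` is reached from `∅` by the level-1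
operators `f̃_{i_1} ⋯ f̃_{i_n}`, then applying each operator twice in the level-2 Fock
space with bicharge `(0,0)` reaches the doubled bipartition `(λ,λ)`; in particular
`(λ,λ)` is an Uglov bipartition for `(e,(0,0))`. -/
theorem stmt_15 (e n : ℕ) (he : 1 < e) (l : YPartition) (hreg : ERegular e l)
    (res : ℕ → ℤ) (seq : ℕ → YPartition)
    (h0 : seq 0 = emptyP) (hn : seq n = l)
    (hstep : ∀ t, t < n → FStep1 e ((res t : ℤ) : ZMod e) (seq t) (seq (t+1))) :
    ∃ bseq : ℕ → YPartition × YPartition,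
      bseq 0 = (emptyP, emptyP) ∧ bseq (2*n) = (l, l) ∧
      ∀ t, t < 2*n →
        FStep2 e 0 0 ((res (t/2) : ℤ) : ZMod e) (bseq t) (bseq (t+1)) :=
  stmt_15_general e n he l res seq h0 hn hstep
end

section
/- Assume the greedy-injection conjecture (for all X ∈ P^m and odd k, the iterated map Ψ_{(e,(0,ke))}∘⋯∘Ψ_{(e,(0,0))}(X,X) = (X_1,X_2) satisfies X_1 ⊆ X_2). Then for every e-regular partition λ and every k ≥ 0, the iterated crystal isomorphisms satisfy ψ_{(2e,(0,(2k+1)e))}∘⋯∘ψ_{(2e,(0,3e))}∘ψ_{(2e,(0,e))}(λ,λ) = ψ_{(e,(0,(2k+1)e))}∘⋯∘ψ_{(e,(0,e))}∘ψ_{(e,(0,0))}(λ,λ); in particular the stabilized isomorphisms agree: ψ̃_{(2e,(0,e))}(λ,λ) = ψ̃_{(e,(0,0))}(λ,λ). -/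
/-- the β-set of `l` with respect to `c = s + m` : `{l_j - j + c : 1 ≤ j ≤ c}`
(written 0-indexed as `{l.parts j + (c - 1 - j) : 0 ≤ j < c}`). -/
def betaSet (l : YPartition) (c : ℕ) : Finset ℕ :=
  (Finset.range c).image (fun j => l.parts j + (c - 1 - j))

/-- iterate the map `(X1,X2) ↦ Ψ_e(X1,X2)` (the combinatorial formula for
`Ψ_{(e,(m1,m2))}` does not depend on `(m1,m2)`). -/
def iterPsi (e : ℕ) : ℕ → Finset ℕ × Finset ℕ → Finset ℕ × Finset ℕ
  | 0, p => p
  | k+1, p => Psi e (iterPsi e k p).1 (iterPsi e k p).2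

/-- the crystal isomorphism `ψ_{(e,(s1,s2))} : Φ_{(e,(s1,s2))} → Φ_{(e,(s1,s2+e))}`,
expressed combinatorially on β-sets: `PsiRel e s1 s2 L M` holds when for every
admissible `m`, applying `Ψ_e` to the β-sets of `L` (sizes `s1+m`, `s2+m`) yields the
β-sets of `M` (sizes `s1+m`, `s2+e+m`). -/
def PsiRel (e s1 s2 : ℕ) (L M : YPartition × YPartition) : Prop :=
  ∀ m : ℕ, L.1.parts (s1 + m) = 0 → L.2.parts (s2 + m) = 0 →
    M.1.parts (s1 + m) = 0 → M.2.parts (s2 + e + m) = 0 →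
    Psi e (betaSet L.1 (s1 + m)) (betaSet L.2 (s2 + m)) =
      (betaSet M.1 (s1 + m), betaSet M.2 (s2 + e + m))

open Filter

namespace YPartition

lemma eventually_parts_eq_zero (l : YPartition) : ∀ᶠ i in atTop, l.parts i = 0 := by
  obtain ⟨N, hN⟩ := l.finite
  exact eventually_atTop.2 ⟨N, fun i hi => Nat.eq_zero_of_le_zero (hN ▸ l.antitone hi)⟩

lemma strictAnti_betaSet_entry (l : YPartition) (c : ℕ) :
    StrictAnti fun i : Fin c => l.parts i + (c - 1 - i) := fun i j hij => by
  have := l.antitone hij.le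
  have := j.isLt
  simp only [Fin.lt_def] at hij ⊢
  omega

lemma parts_eq_of_betaSet_eq {l l' : YPartition} {c i : ℕ} (h : betaSet l c = betaSet l' c)
    (hi : i < c) : l.parts i = l'.parts i := by
  have hrange : ∀ l : YPartition, Set.range (fun i : Fin c => l.parts i + (c - 1 - i)) =
      (betaSet l c : Set ℕ) := fun l => by
    ext x
    simp [betaSet, Fin.exists_iff]
  have := congrFun (((strictAnti_betaSet_entry l c).range_inj
    (strictAnti_betaSet_entry l' c)).1 (by rw [hrange, hrange, h])) ⟨i, hi⟩
  simp only at this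
  omega

end YPartition

def betaShift (e : ℕ) (X : Finset ℕ) : Finset ℕ :=
  X.image (· + e) ∪ Finset.range e

lemma betaShift_betaShift (a b : ℕ) (X : Finset ℕ) :
    betaShift a (betaShift b X) = betaShift (b + a) X := by
  ext x
  simp only [betaShift, Finset.mem_union, Finset.mem_image, Finset.mem_range]
  constructor
  · rintro (⟨y, (⟨z, hz, rfl⟩ | hy), rfl⟩ | hx)
    · exact Or.inl ⟨z, hz, by omega⟩
    · exact Or.inr (by omega)
    · exact Or.inr (by omega)
  · rintro (⟨z, hz, rfl⟩ | hx)
    · exact Or.inl ⟨z + b, Or.inl ⟨z, hz, rfl⟩, by omega⟩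
    · by_cases hxa : x < a
      · exact Or.inr hxa
      · exact Or.inl ⟨x - a, Or.inr (by omega), by omega⟩

lemma betaSet_add (l : YPartition) {c : ℕ} (e : ℕ) (h : l.parts c = 0) :
    betaSet l (c + e) = betaShift e (betaSet l c) := by
  have hz : ∀ j, c ≤ j → l.parts j = 0 := fun j hj =>
    Nat.eq_zero_of_le_zero (h ▸ l.antitone hj)
  ext x
  simp only [betaSet, betaShift, Finset.mem_union, Finset.mem_image, Finset.mem_range]
  constructor
  · rintro ⟨j, hj, rfl⟩
    by_cases hjc : j < c
    · exact Or.inl ⟨_, ⟨j, hjc, rfl⟩, by omega⟩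
    · exact Or.inr (by rw [hz j (by omega)]; omega)
  · rintro (⟨x, ⟨j, hj, rfl⟩, rfl⟩ | hx)
    · exact ⟨j, by omega, by omega⟩
    · exact ⟨c + e - 1 - x, by omega, by rw [hz _ (by omega)]; omega⟩

lemma Psi_eq_betaShift (e : ℕ) (X1 X2 : Finset ℕ) :
    Psi e X1 X2 = (phiImage X1 X2, betaShift e (X1 ∪ X2 \ phiImage X1 X2)) := by
  rw [Psi, betaShift, Finset.image_union]

lemma pickLE_of_mem {a : ℕ} {Y : Finset ℕ} (ha : a ∈ Y) : pickLE a Y = a := by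
  have hmem : a ∈ Y.filter (· ≤ a) := Finset.mem_filter.2 ⟨ha, le_rfl⟩
  rw [pickLE, dif_pos ⟨a, hmem⟩]
  exact le_antisymm (Finset.mem_filter.1 (Finset.max'_mem (Y.filter (· ≤ a)) _)).2
    (Finset.le_max' _ a hmem)

lemma greedyList_of_subset {L : List ℕ} {Y : Finset ℕ} (hL : L.Nodup) (hLY : ∀ a ∈ L, a ∈ Y) :
    greedyList L Y = L := by
  induction L generalizing Y with
  | nil => rfl
  | cons a L ih =>
    obtain ⟨haL, hL⟩ := List.nodup_cons.1 hL
    rw [greedyList, pickLE_of_mem (hLY a List.mem_cons_self), ih hL]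
    exact fun b hb => Finset.mem_erase.2 ⟨fun hba => haL (hba ▸ hb), hLY b (.tail a hb)⟩

lemma phiImage_of_subset {X1 X2 : Finset ℕ} (h : X1 ⊆ X2) : phiImage X1 X2 = X1 := by
  rw [phiImage, phiList, greedyList_of_subset (X1.sort_nodup _)
    (fun a ha => h ((Finset.mem_sort _).1 ha)), Finset.sort_toFinset]

lemma Psi_of_subset (e : ℕ) {X1 X2 : Finset ℕ} (h : X1 ⊆ X2) :
    Psi e X1 X2 = (X1, betaShift e X2) := by
  rw [Psi_eq_betaShift, phiImage_of_subset h, Finset.union_sdiff_of_subset h]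

lemma Psi_two_mul (e : ℕ) {X1 X2 : Finset ℕ} (h : (Psi e X1 X2).1 ⊆ (Psi e X1 X2).2) :
    Psi (2 * e) X1 X2 = Psi e (Psi e X1 X2).1 (Psi e X1 X2).2 := by
  rw [Psi_of_subset e h]
  simp only [Psi_eq_betaShift, betaShift_betaShift, two_mul]

lemma iterPsi_succ (e k : ℕ) (p : Finset ℕ × Finset ℕ) :
    iterPsi e (k + 1) p = Psi e (iterPsi e k p).1 (iterPsi e k p).2 := rfl

lemma iterPsi_two_mul {e : ℕ} {X : Finset ℕ}
    (hX : ∀ k, Odd k → (iterPsi e (k + 1) (X, X)).1 ⊆ (iterPsi e (k + 1) (X, X)).2) (j : ℕ) :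
    iterPsi (2 * e) j (X, betaShift e X) = iterPsi e (2 * j + 1) (X, X) := by
  induction j with
  | zero => exact (Psi_of_subset e subset_rfl).symm
  | succ j ih => rw [iterPsi_succ, ih, Psi_two_mul e (hX (2 * j + 1) ⟨j, rfl⟩)]; rfl

lemma eventually_betaSet_chain_eq_iterPsi {e s n : ℕ} {B : ℕ → YPartition × YPartition}
    (hB : ∀ j < n, PsiRel e 0 (s + j * e) (B j) (B (j + 1))) :
    ∀ᶠ m in atTop, ∀ j ≤ n, (betaSet (B j).1 m, betaSet (B j).2 (s + j * e + m)) =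
      iterPsi e j (betaSet (B 0).1 m, betaSet (B 0).2 (s + m)) := by
  have hvan : ∀ᶠ m in atTop, ∀ j ≤ n, ∀ i, m ≤ i →
      (B j).1.parts i = 0 ∧ (B j).2.parts i = 0 :=
    (eventually_all_finite (Set.finite_Iic n)).2 fun j _ => eventually_forall_ge_atTop.2
      ((B j).1.eventually_parts_eq_zero.and (B j).2.eventually_parts_eq_zero)
  filter_upwards [hvan] with m hm j hj
  induction j with
  | zero => simp [iterPsi]
  | succ j ih =>
    have hrel := hB j (by omega) m (hm j (by omega) _ (by omega)).1
      (hm j (by omega) _ (by omega)).2 (hm (j + 1) hj _ (by omega)).1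
      (hm (j + 1) hj _ (by omega)).2
    rw [zero_add, show s + j * e + e + m = s + (j + 1) * e + m by ring] at hrel
    rw [iterPsi_succ, ← ih (by omega), hrel]

theorem stmt_17_general (e : ℕ)
    (hconj : ∀ (X : Finset ℕ) (k : ℕ), Odd k →
      (iterPsi e (k+1) (X, X)).1 ⊆ (iterPsi e (k+1) (X, X)).2)
    (l : YPartition) (k : ℕ)
    (B1 B2 : ℕ → YPartition × YPartition)
    (hB10 : B1 0 = (l, l)) (hB20 : B2 0 = (l, l))
    (hB1 : ∀ j, j < 2*k+2 → PsiRel e 0 (j*e) (B1 j) (B1 (j+1)))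
    (hB2 : ∀ j, j < k+1 → PsiRel (2*e) 0 ((2*j+1)*e) (B2 j) (B2 (j+1))) :
    (B1 (2*k+2)).1.parts = (B2 (k+1)).1.parts ∧
    (B1 (2*k+2)).2.parts = (B2 (k+1)).2.parts := by
  have h1 := eventually_betaSet_chain_eq_iterPsi (s := 0) fun j hj => by
    simpa using hB1 j hj
  have h2 := eventually_betaSet_chain_eq_iterPsi (s := e) fun j hj => by
    rw [show e + j * (2 * e) = (2 * j + 1) * e by ring]; exact hB2 j hj
  have key : ∀ᶠ m in atTop, betaSet (B1 (2*k+2)).1 m = betaSet (B2 (k+1)).1 m ∧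
      betaSet (B1 (2*k+2)).2 ((2*k+2) * e + m + e) =
        betaSet (B2 (k+1)).2 ((2*k+2) * e + m + e) := by
    filter_upwards [h1, h2, l.eventually_parts_eq_zero,
      eventually_forall_ge_atTop.2 (B1 (2*k+2)).2.eventually_parts_eq_zero]
      with m hchain1 hchain2 hl hvan
    set A := iterPsi e (2*k+2) (betaSet l m, betaSet l m)
    have hA : iterPsi e (2 * (k + 1) + 1) (betaSet l m, betaSet l m) = (A.1, betaShift e A.2) :=
      Psi_of_subset e (hconj _ (2*k+1) ⟨k, rfl⟩)
    have e1 := hchain1 _ le_rfl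
    have e2 := hchain2 _ le_rfl
    simp only [hB10, hB20, zero_add] at e1 e2
    rw [add_comm e m, betaSet_add l e hl, iterPsi_two_mul (hconj _), hA,
      show e + (k + 1) * (2 * e) + m = (2*k+2) * e + m + e by ring] at e2
    simp only [Prod.ext_iff] at e1 e2
    rw [betaSet_add _ e (hvan _ (by omega)), e1.1, e1.2, e2.1, e2.2]
    exact ⟨rfl, rfl⟩
  refine ⟨funext fun i => ?_, funext fun i => ?_⟩ <;>
    obtain ⟨m, hm, hi⟩ := (key.and (eventually_gt_atTop i)).exists
  · exact YPartition.parts_eq_of_betaSet_eq hm.1 hi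
  · exact YPartition.parts_eq_of_betaSet_eq hm.2 (by omega)

/-- assume the greedy-injection conjecture (for all `X` and odd `k`, the
`k+1`-fold iterate of `Ψ` on `(X,X)` satisfies the inclusion of components). Then for
every `e`-regular partition `λ` and every `k`, the chain of crystal isomorphisms
`ψ_{(2e,(0,(2k+1)e))}∘⋯∘ψ_{(2e,(0,e))}` and the chain
`ψ_{(e,(0,(2k+1)e))}∘⋯∘ψ_{(e,(0,0))}` take `(λ,λ)` to the same bipartition; in
particular the stabilized isomorphisms agree: `ψ̃_{(2e,(0,e))}(λ,λ) = ψ̃_{(e,(0,0))}(λ,λ)`. -/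
theorem stmt_17 (e : ℕ) (he : 1 < e)
    (hconj : ∀ (X : Finset ℕ) (k : ℕ), Odd k →
      (iterPsi e (k+1) (X, X)).1 ⊆ (iterPsi e (k+1) (X, X)).2)
    (l : YPartition) (hreg : ERegular e l) (k : ℕ)
    (B1 B2 : ℕ → YPartition × YPartition)
    (hB10 : B1 0 = (l, l)) (hB20 : B2 0 = (l, l))
    (hB1 : ∀ j, j < 2*k+2 → PsiRel e 0 (j*e) (B1 j) (B1 (j+1)))
    (hB2 : ∀ j, j < k+1 → PsiRel (2*e) 0 ((2*j+1)*e) (B2 j) (B2 (j+1))) :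
    (B1 (2*k+2)).1.parts = (B2 (k+1)).1.parts ∧
    (B1 (2*k+2)).2.parts = (B2 (k+1)).2.parts :=
  stmt_17_general e hconj l k B1 B2 hB10 hB20 hB1 hB2
end

section
/- If (λ¹, λ²) is a bipartition such that λ¹_1 - 1 + s_1 ≤ s_2 - h, where h - 1 is the number of nonzero parts of λ² (h = max{i : λ²_i ≠ 0} + 1), then for every m the β-sets satisfy X^{s_1,m}(λ¹) ⊆ X^{s_2,m}(λ²). -/
/-- if `λ¹_1 - 1 + s_1 ≤ s_2 - h` where `h - 1` bounds the number of
nonzero parts of `λ²`, then the β-sets satisfy `X^{s_1,m}(λ¹) ⊆ X^{s_2,m}(λ²)`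
for every (admissible) `m`. -/
theorem stmt_18 (s1 s2 h : ℕ) (hs : s1 ≤ s2) (l1 l2 : YPartition)
    (hh : 1 ≤ h) (hzero : ∀ i, h - 1 ≤ i → l2.parts i = 0)
    (hdom : (l1.parts 0 : ℤ) - 1 + s1 ≤ (s2 : ℤ) - h) :
    ∀ m : ℕ, l1.parts (s1 + m) = 0 → l2.parts (s2 + m) = 0 →
      betaSet l1 (s1 + m) ⊆ betaSet l2 (s2 + m) := by
  intro m hm1 hm2 x hx
  simp only [betaSet, Finset.mem_image, Finset.mem_range] at hx ⊢
  obtain ⟨j, hj, rfl⟩ := hx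
  have hmono : l1.parts j ≤ l1.parts 0 := l1.antitone (Nat.zero_le j)
  refine ⟨s2 + m - 1 - (l1.parts j + (s1 + m - 1 - j)), by omega, ?_⟩
  rw [hzero _ (by omega)]
  omega
end
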